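/- arXiv:2404.06245 — 4 statements merged into one kernel-verified Lean document; each statement's English description precedes it below -/
import Mathlib

section
/- For every graph G, the coalition number C(G) satisfies C(G) ≤ (Δ(G)+3)²/4, where Δ(G) is the maximum vertex degree. -/
/-- `S` dominates the vertex `v`: `v ∈ S` or some vertex of `S` is adjacent to `v`. -/
def SimpleGraph.DominatesVert {V : Type*} (G : SimpleGraph V) (S : Finset V) (v : V) : Prop :=
  v ∈ S ∨ ∃ u ∈ S, G.Adj u v

/-- `S` is a dominating set of `G`. -/
def SimpleGraph.IsDominatingSet {V : Type*} (G : SimpleGraph V) (S : Finset V) : Prop :=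
  ∀ v, G.DominatesVert S v

/-- A coalition partition of `G`: a partition of the vertex set into nonempty parts,
each of which is either a dominating singleton, or a non-dominating set forming a
coalition (dominating union) with another non-dominating part. -/
def SimpleGraph.IsCoalitionPartition {V : Type*} [Fintype V] [DecidableEq V]
    (G : SimpleGraph V) (P : Finset (Finset V)) : Prop :=
  (∀ A ∈ P, A.Nonempty) ∧
  (∀ A ∈ P, ∀ B ∈ P, A ≠ B → Disjoint A B) ∧
  (∀ v : V, ∃ A ∈ P, v ∈ A) ∧
  ∀ A ∈ P,
    (∃ v, A = {v} ∧ G.IsDominatingSet A) ∨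
    (¬ G.IsDominatingSet A ∧
      ∃ B ∈ P, B ≠ A ∧ ¬ G.IsDominatingSet B ∧ G.IsDominatingSet (A ∪ B))

/-- The coalition number of `G`: the maximum number of parts in a coalition partition. -/
noncomputable def SimpleGraph.coalitionNumber {V : Type*} [Fintype V] [DecidableEq V]
    (G : SimpleGraph V) : ℕ :=
  sSup {k | ∃ P : Finset (Finset V), G.IsCoalitionPartition P ∧ P.card = k}

instance {V : Type*} [DecidableEq V] (G : SimpleGraph V) [DecidableRel G.Adj]
    (S : Finset V) (v : V) : Decidable (G.DominatesVert S v) :=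
  decidable_of_iff (v ∈ S ∨ ∃ u ∈ S, G.Adj u v) Iff.rfl

instance {V : Type*} [Fintype V] [DecidableEq V] (G : SimpleGraph V) [DecidableRel G.Adj]
    (S : Finset V) : Decidable (G.IsDominatingSet S) :=
  decidable_of_iff (∀ v, G.DominatesVert S v) Iff.rfl

private lemma aux_arith (a b : ℕ) : a * b * 4 ≤ (a + b) ^ 2 := by
  zify
  nlinarith [sq_nonneg ((a : ℤ) - (b : ℤ))]

section Aux

variable {V : Type*} [Fintype V] [DecidableEq V] (G : SimpleGraph V) [DecidableRel G.Adj]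

omit [Fintype V] [DecidableRel G.Adj] in
private lemma domVert_union (A B : Finset V) (v : V) :
    G.DominatesVert (A ∪ B) v ↔ G.DominatesVert A v ∨ G.DominatesVert B v := by
  unfold SimpleGraph.DominatesVert
  constructor
  · rintro (hv | ⟨u, hu, hadj⟩)
    · rcases Finset.mem_union.1 hv with h | h
      · exact Or.inl (Or.inl h)
      · exact Or.inr (Or.inl h)
    · rcases Finset.mem_union.1 hu with h | h
      · exact Or.inl (Or.inr ⟨u, h, hadj⟩)
      · exact Or.inr (Or.inr ⟨u, h, hadj⟩)
  · rintro ((hv | ⟨u, hu, hadj⟩) | (hv | ⟨u, hu, hadj⟩))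
    · exact Or.inl (Finset.mem_union_left _ hv)
    · exact Or.inr ⟨u, Finset.mem_union_left _ hu, hadj⟩
    · exact Or.inl (Finset.mem_union_right _ hv)
    · exact Or.inr ⟨u, Finset.mem_union_right _ hu, hadj⟩

/-- The number of parts (pairwise disjoint sets) dominating a fixed vertex `w` is at most
`Δ + 1`, since each such part contains its own vertex of the closed neighborhood of `w`. -/
private lemma card_dom_filter_le (P : Finset (Finset V))
    (hdisj : ∀ A ∈ P, ∀ B ∈ P, A ≠ B → Disjoint A B) (w : V) :
    (P.filter (fun p => G.DominatesVert p w)).card ≤ G.maxDegree + 1 := by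
  classical
  set Nw : Finset V := insert w (G.neighborFinset w) with hNw
  have hNwcard : Nw.card ≤ G.maxDegree + 1 := by
    have h1 : Nw.card ≤ (G.neighborFinset w).card + 1 := Finset.card_insert_le _ _
    have h2 : (G.neighborFinset w).card = G.degree w := G.card_neighborFinset_eq_degree w
    have h3 := G.degree_le_maxDegree w
    omega
  have hex : ∀ p ∈ P.filter (fun p => G.DominatesVert p w), ∃ y, y ∈ p ∧ y ∈ Nw := by
    intro p hp
    rcases Finset.mem_filter.1 hp with ⟨hpP, hpd⟩
    rcases hpd with hv | ⟨u, hu, hadj⟩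
    · exact ⟨w, hv, Finset.mem_insert_self _ _⟩
    · exact ⟨u, hu, Finset.mem_insert_of_mem ((G.mem_neighborFinset w u).2 hadj.symm)⟩
  set f : Finset V → V := fun p => if h : ∃ y, y ∈ p ∧ y ∈ Nw then h.choose else w with hf
  have hfspec : ∀ p ∈ P.filter (fun p => G.DominatesVert p w), f p ∈ p ∧ f p ∈ Nw := by
    intro p hp
    have h := hex p hp
    simp only [hf, dif_pos h]
    exact h.choose_spec
  calc (P.filter (fun p => G.DominatesVert p w)).card ≤ Nw.card := by
        apply Finset.card_le_card_of_injOn f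
        · intro p hp
          exact (hfspec p hp).2
        · intro p₁ h₁ p₂ h₂ hfe
          by_contra hne'
          have h₁' : p₁ ∈ P.filter (fun p => G.DominatesVert p w) := h₁
          have h₂' : p₂ ∈ P.filter (fun p => G.DominatesVert p w) := h₂
          have hd := hdisj p₁ (Finset.mem_of_mem_filter _ h₁') p₂
            (Finset.mem_of_mem_filter _ h₂') hne'
          have hm1 : f p₁ ∈ p₁ := (hfspec p₁ h₁').1
          have hm2 : f p₁ ∈ p₂ := by rw [hfe]; exact (hfspec p₂ h₂').1
          exact (Finset.disjoint_left.1 hd hm1) hm2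
    _ ≤ G.maxDegree + 1 := hNwcard

/-- The main counting lemma: any coalition partition has at most `(Δ+3)²/4` parts. -/
private lemma card_le_of_coalition (P : Finset (Finset V)) (hP : G.IsCoalitionPartition P) :
    P.card ≤ (G.maxDegree + 3) ^ 2 / 4 := by
  classical
  obtain ⟨hne, hdisj, hcov, hcoal⟩ := hP
  rw [Nat.le_div_iff_mul_le (by norm_num : (0:ℕ) < 4)]
  by_cases hdompart : ∃ p ∈ P, G.IsDominatingSet p
  · -- Case 1: some part is dominating, hence a dominating singleton; so `n ≤ Δ + 1`.
    obtain ⟨p, hp, hpd⟩ := hdompart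
    rcases hcoal p hp with ⟨v, hpv, -⟩ | ⟨hnd, -⟩
    on_goal 2 => exact absurd hpd hnd
    · subst hpv
      have hvdeg : Fintype.card V ≤ G.maxDegree + 1 := by
        have hsub : Finset.univ.erase v ⊆ G.neighborFinset v := by
          intro u hu
          rcases Finset.mem_erase.1 hu with ⟨hne', -⟩
          rcases hpd u with h | ⟨x, hx, hadj⟩
          · exact absurd (Finset.mem_singleton.1 h) hne'
          · have hxv : x = v := Finset.mem_singleton.1 hx
            rw [hxv] at hadj
            exact (G.mem_neighborFinset v u).2 hadj
        have h1 : (Finset.univ.erase v).card = Fintype.card V - 1 := by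
          rw [Finset.card_erase_of_mem (Finset.mem_univ v), Finset.card_univ]
        have h2 := Finset.card_le_card hsub
        have h3 : (G.neighborFinset v).card = G.degree v := G.card_neighborFinset_eq_degree v
        have h4 := G.degree_le_maxDegree v
        have h5 : 1 ≤ Fintype.card V := Fintype.card_pos_iff.2 ⟨v⟩
        omega
      have hkn : P.card ≤ Fintype.card V := by
        have h1 : (P.biUnion id).card = ∑ p ∈ P, p.card :=
          Finset.card_biUnion (fun x hx y hy hxy => hdisj x hx y hy hxy)
        have h2 : P.card ≤ ∑ p ∈ P, p.card := by
          calc P.card = ∑ _p ∈ P, 1 := by simp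
            _ ≤ ∑ p ∈ P, p.card := Finset.sum_le_sum (fun p hp => Finset.card_pos.2 (hne p hp))
        have h3 : (P.biUnion id).card ≤ Fintype.card V := by
          rw [← Finset.card_univ]
          exact Finset.card_le_card (Finset.subset_univ _)
        omega
      nlinarith [hkn, hvdeg]
  · -- Case 2: every part is non-dominating (and thus has a coalition partner).
    push_neg at hdompart
    by_cases hPe : P = ∅
    · simp [hPe]
    obtain ⟨p₀, hp₀⟩ := Finset.nonempty_iff_ne_empty.2 hPe
    have hpart : ∀ p ∈ P, ∃ q ∈ P, q ≠ p ∧ G.IsDominatingSet (p ∪ q) := by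
      intro p hp
      rcases hcoal p hp with ⟨v, hpv, hd⟩ | ⟨-, q, hq, hqne, -, hd⟩
      · exact absurd hd (hdompart p hp)
      · exact ⟨q, hq, hqne, hd⟩
    -- a maximum "independent" (pairwise non-coalition) subfamily Y
    set Fam : Finset (Finset (Finset V)) :=
      P.powerset.filter
        (fun Q => ∀ p ∈ Q, ∀ q ∈ Q, p ≠ q → ¬ G.IsDominatingSet (p ∪ q)) with hFam
    have hFamne : Fam.Nonempty := by
      refine ⟨∅, Finset.mem_filter.2 ⟨Finset.empty_mem_powerset P, ?_⟩⟩
      intro p hp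
      exact absurd hp (Finset.notMem_empty p)
    obtain ⟨Y, hYFam, hYmax⟩ := Finset.exists_max_image Fam Finset.card hFamne
    have hYP : Y ⊆ P := Finset.mem_powerset.1 (Finset.mem_filter.1 hYFam).1
    have hYind : ∀ p ∈ Y, ∀ q ∈ Y, p ≠ q → ¬ G.IsDominatingSet (p ∪ q) :=
      (Finset.mem_filter.1 hYFam).2
    set C : Finset (Finset V) := P \ Y with hC
    have hCP : C ⊆ P := Finset.sdiff_subset
    have hYC : ∀ z ∈ C, z ∉ Y := fun z hz => (Finset.mem_sdiff.1 hz).2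
    -- AU S = parts of Y in coalition with some part of S
    have hAUY : ∀ S : Finset (Finset V),
        Y.filter (fun p => ∃ x ∈ S, G.IsDominatingSet (x ∪ p)) ⊆ Y :=
      fun S => Finset.filter_subset _ _
    have hAUmono : ∀ S T : Finset (Finset V), S ⊆ T →
        Y.filter (fun p => ∃ x ∈ S, G.IsDominatingSet (x ∪ p)) ⊆
          Y.filter (fun p => ∃ x ∈ T, G.IsDominatingSet (x ∪ p)) := by
      intro S T hST p hp
      rcases Finset.mem_filter.1 hp with ⟨h1, x, hx, h2⟩
      exact Finset.mem_filter.2 ⟨h1, x, hST hx, h2⟩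
    -- the swap lemma: an independent subfamily of C has at least as many Y-partners
    have hswap : ∀ S ⊆ C, (∀ p ∈ S, ∀ q ∈ S, p ≠ q → ¬ G.IsDominatingSet (p ∪ q)) →
        S.card ≤ (Y.filter (fun p => ∃ x ∈ S, G.IsDominatingSet (x ∪ p))).card := by
      intro S hSC hSind
      set AUS := Y.filter (fun p => ∃ x ∈ S, G.IsDominatingSet (x ∪ p)) with hAUS
      set Y' := (Y \ AUS) ∪ S with hY'
      have hY'P : Y' ⊆ P := Finset.union_subset (Finset.sdiff_subset.trans hYP) (hSC.trans hCP)
      have hY'ind : ∀ p ∈ Y', ∀ q ∈ Y', p ≠ q → ¬ G.IsDominatingSet (p ∪ q) := by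
        intro p hp q hq hpq hcon
        rcases Finset.mem_union.1 hp with hp' | hp' <;> rcases Finset.mem_union.1 hq with hq' | hq'
        · exact hYind p (Finset.mem_sdiff.1 hp').1 q (Finset.mem_sdiff.1 hq').1 hpq hcon
        · apply (Finset.mem_sdiff.1 hp').2
          exact Finset.mem_filter.2 ⟨(Finset.mem_sdiff.1 hp').1, q, hq',
            by rwa [Finset.union_comm] at hcon⟩
        · apply (Finset.mem_sdiff.1 hq').2
          exact Finset.mem_filter.2 ⟨(Finset.mem_sdiff.1 hq').1, p, hp', hcon⟩
        · exact hSind p hp' q hq' hpq hcon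
      have hY'Fam : Y' ∈ Fam := Finset.mem_filter.2 ⟨Finset.mem_powerset.2 hY'P, hY'ind⟩
      have hle := hYmax Y' hY'Fam
      have hdisj' : Disjoint (Y \ AUS) S := by
        rw [Finset.disjoint_right]
        intro z hzS hz'
        exact hYC z (hSC hzS) (Finset.mem_sdiff.1 hz').1
      have hcard1 : Y'.card = (Y \ AUS).card + S.card := Finset.card_union_of_disjoint hdisj'
      have hcard2 : (Y \ AUS).card = Y.card - AUS.card := Finset.card_sdiff_of_subset (hAUY S)
      have hcard3 : AUS.card ≤ Y.card := Finset.card_le_card (hAUY S)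
      omega
    -- c ≤ Δ + 1
    have hc : C.card ≤ G.maxDegree + 1 := by
      obtain ⟨w₀, hw₀⟩ := not_forall.1 (hdompart p₀ hp₀)
      have hZind : ∀ p ∈ P.filter (fun z => ¬ G.DominatesVert z w₀),
          ∀ q ∈ P.filter (fun z => ¬ G.DominatesVert z w₀), p ≠ q →
            ¬ G.IsDominatingSet (p ∪ q) := by
        intro p hp q hq hpq hcon
        rcases (domVert_union G p q w₀).1 (hcon w₀) with h | h
        · exact (Finset.mem_filter.1 hp).2 h
        · exact (Finset.mem_filter.1 hq).2 h
      have hZFam : P.filter (fun z => ¬ G.DominatesVert z w₀) ∈ Fam :=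
        Finset.mem_filter.2 ⟨Finset.mem_powerset.2 (Finset.filter_subset _ _), hZind⟩
      have h1 := hYmax _ hZFam
      have h2 := card_dom_filter_le G P hdisj w₀
      have h3 := Finset.card_filter_add_card_filter_not
        (s := P) (p := fun z => G.DominatesVert z w₀)
      have hYk : Y.card ≤ P.card := Finset.card_le_card hYP
      have hCcard : C.card = P.card - Y.card := Finset.card_sdiff_of_subset hYP
      omega
    -- key constraint for any vertex w
    have hKbound : ∀ w : V,
        (Y.filter (fun p => ∃ x ∈ C.filter (fun z => ¬ G.DominatesVert z w),
            G.IsDominatingSet (x ∪ p))).card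
          + (C \ C.filter (fun z => ¬ G.DominatesVert z w)).card ≤ G.maxDegree + 1 := by
      intro w
      set Kx := C.filter (fun z => ¬ G.DominatesVert z w) with hKx
      set AUK := Y.filter (fun p => ∃ x ∈ Kx, G.IsDominatingSet (x ∪ p)) with hAUK
      have hsub : AUK ∪ (C \ Kx) ⊆ P.filter (fun p => G.DominatesVert p w) := by
        intro p hp
        rcases Finset.mem_union.1 hp with hp' | hp'
        · rcases Finset.mem_filter.1 hp' with ⟨hpY, z, hz, hdz⟩
          have hzmiss : ¬ G.DominatesVert z w := (Finset.mem_filter.1 hz).2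
          rcases (domVert_union G z p w).1 (hdz w) with h | h
          · exact absurd h hzmiss
          · exact Finset.mem_filter.2 ⟨hYP hpY, h⟩
        · rcases Finset.mem_sdiff.1 hp' with ⟨hpC, hpK⟩
          have hdp : G.DominatesVert p w := by
            by_contra hcon
            exact hpK (Finset.mem_filter.2 ⟨hpC, hcon⟩)
          exact Finset.mem_filter.2 ⟨hCP hpC, hdp⟩
      have hdisj2 : Disjoint AUK (C \ Kx) := by
        rw [Finset.disjoint_right]
        intro z hz hz2
        exact hYC z (Finset.mem_sdiff.1 hz).1 (hAUY Kx hz2)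
      calc AUK.card + (C \ Kx).card = (AUK ∪ (C \ Kx)).card :=
            (Finset.card_union_of_disjoint hdisj2).symm
        _ ≤ (P.filter (fun p => G.DominatesVert p w)).card := Finset.card_le_card hsub
        _ ≤ G.maxDegree + 1 := card_dom_filter_le G P hdisj w
    -- the greedy covering induction
    have hkey : ∀ N : ℕ, ∀ R : Finset (Finset V), R ⊆ C → R.card ≤ N →
        (Y.filter (fun p => ∃ x ∈ C, G.IsDominatingSet (x ∪ p))).card ≤
          (Y.filter (fun p => ∃ x ∈ C \ R, G.IsDominatingSet (x ∪ p))).card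
            + R.card * (G.maxDegree + 1 - C.card + 1) := by
      intro N
      induction N with
      | zero =>
        intro R hRC hR0
        have hRe : R = ∅ := Finset.card_eq_zero.1 (Nat.le_zero.1 hR0)
        subst hRe
        simp
      | succ N ih =>
        intro R hRC hRcard
        by_cases hRe : R = ∅
        · subst hRe; simp
        obtain ⟨x, hxR⟩ := Finset.nonempty_iff_ne_empty.2 hRe
        have hxC := hRC hxR
        obtain ⟨w, hw⟩ := not_forall.1 (hdompart x (hCP hxC))
        set Kx := C.filter (fun z => ¬ G.DominatesVert z w) with hKx
        have hKxC : Kx ⊆ C := Finset.filter_subset _ _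
        have hxKx : x ∈ Kx := Finset.mem_filter.2 ⟨hxC, hw⟩
        set S := Kx ∩ R with hS
        have hSKx : S ⊆ Kx := Finset.inter_subset_left
        have hSR : S ⊆ R := Finset.inter_subset_right
        have hxS : x ∈ S := Finset.mem_inter.2 ⟨hxKx, hxR⟩
        set R' := R \ S with hR'
        have hR'R : R' ⊆ R := Finset.sdiff_subset
        have hR'card : R'.card < R.card := by
          apply Finset.card_lt_card
          rw [Finset.ssubset_iff_of_subset hR'R]
          exact ⟨x, hxR, fun hx' => (Finset.mem_sdiff.1 hx').2 hxS⟩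
        have hCRsplit : C \ R' = (C \ R) ∪ S := by
          ext z
          simp only [hR', Finset.mem_sdiff, Finset.mem_union]
          constructor
          · rintro ⟨hzC, hz2⟩
            by_cases hzS : z ∈ S
            · exact Or.inr hzS
            · exact Or.inl ⟨hzC, fun hzR => hz2 ⟨hzR, hzS⟩⟩
          · rintro (⟨hzC, hzR⟩ | hzS)
            · exact ⟨hzC, fun h => hzR h.1⟩
            · exact ⟨hKxC (hSKx hzS), fun h => h.2 hzS⟩
        have hsub2 : Y.filter (fun p => ∃ x ∈ C \ R', G.IsDominatingSet (x ∪ p)) ⊆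
            (Y.filter (fun p => ∃ x ∈ C \ R, G.IsDominatingSet (x ∪ p))) ∪
              ((Y.filter (fun p => ∃ x ∈ Kx, G.IsDominatingSet (x ∪ p))) \
                (Y.filter (fun p => ∃ x ∈ Kx ∩ (C \ R), G.IsDominatingSet (x ∪ p)))) := by
          intro p hp
          rcases Finset.mem_filter.1 hp with ⟨hpY, z, hz, hdz⟩
          rw [hCRsplit] at hz
          rcases Finset.mem_union.1 hz with hz' | hz'
          · exact Finset.mem_union_left _ (Finset.mem_filter.2 ⟨hpY, z, hz', hdz⟩)
          · by_cases hp2 : p ∈ Y.filter (fun p => ∃ x ∈ Kx ∩ (C \ R),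
                G.IsDominatingSet (x ∪ p))
            · exact Finset.mem_union_left _ (hAUmono _ _ Finset.inter_subset_right hp2)
            · exact Finset.mem_union_right _ (Finset.mem_sdiff.2
                ⟨Finset.mem_filter.2 ⟨hpY, z, hSKx hz', hdz⟩, hp2⟩)
        have hb1 : (Y.filter (fun p => ∃ x ∈ C \ R', G.IsDominatingSet (x ∪ p))).card ≤
            (Y.filter (fun p => ∃ x ∈ C \ R, G.IsDominatingSet (x ∪ p))).card +
              ((Y.filter (fun p => ∃ x ∈ Kx, G.IsDominatingSet (x ∪ p))).card -
                (Y.filter (fun p => ∃ x ∈ Kx ∩ (C \ R),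
                  G.IsDominatingSet (x ∪ p))).card) := by
          calc (Y.filter (fun p => ∃ x ∈ C \ R', G.IsDominatingSet (x ∪ p))).card
              ≤ ((Y.filter (fun p => ∃ x ∈ C \ R, G.IsDominatingSet (x ∪ p))) ∪
                  ((Y.filter (fun p => ∃ x ∈ Kx, G.IsDominatingSet (x ∪ p))) \
                    (Y.filter (fun p => ∃ x ∈ Kx ∩ (C \ R),
                      G.IsDominatingSet (x ∪ p))))).card := Finset.card_le_card hsub2
            _ ≤ (Y.filter (fun p => ∃ x ∈ C \ R, G.IsDominatingSet (x ∪ p))).card +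
                ((Y.filter (fun p => ∃ x ∈ Kx, G.IsDominatingSet (x ∪ p))) \
                  (Y.filter (fun p => ∃ x ∈ Kx ∩ (C \ R),
                    G.IsDominatingSet (x ∪ p)))).card := Finset.card_union_le _ _
            _ = _ := by
                rw [Finset.card_sdiff_of_subset (hAUmono _ _ Finset.inter_subset_left)]
        have h5' : (Kx ∩ (C \ R)).card ≤
            (Y.filter (fun p => ∃ x ∈ Kx ∩ (C \ R), G.IsDominatingSet (x ∪ p))).card := by
          apply hswap
          · exact Finset.inter_subset_left.trans hKxC
          · intro p hp q hq hpq hcon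
            have hp' : ¬ G.DominatesVert p w := by
              have := (Finset.mem_inter.1 hp).1
              rw [hKx] at this
              exact (Finset.mem_filter.1 this).2
            have hq' : ¬ G.DominatesVert q w := by
              have := (Finset.mem_inter.1 hq).1
              rw [hKx] at this
              exact (Finset.mem_filter.1 this).2
            rcases (domVert_union G p q w).1 (hcon w) with h | h
            exacts [hp' h, hq' h]
        have hKxsplit : Kx ∩ (C \ R) = Kx \ S := by
          ext z
          simp only [hS, Finset.mem_inter, Finset.mem_sdiff]
          constructor
          · rintro ⟨h1, h2, h3⟩
            exact ⟨h1, fun hh => h3 hh.2⟩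
          · rintro ⟨h1, h2⟩
            exact ⟨h1, hKxC h1, fun hzR => h2 ⟨h1, hzR⟩⟩
        have hKxcard : (Kx ∩ (C \ R)).card = Kx.card - S.card := by
          rw [hKxsplit]
          exact Finset.card_sdiff_of_subset hSKx
        have hScard : S.card ≤ Kx.card := Finset.card_le_card hSKx
        have hKxc : Kx.card ≤ C.card := Finset.card_le_card hKxC
        have hcons := hKbound w
        rw [← hKx] at hcons
        have hCKx : (C \ Kx).card = C.card - Kx.card := Finset.card_sdiff_of_subset hKxC
        have hmarg : (Y.filter (fun p => ∃ x ∈ Kx, G.IsDominatingSet (x ∪ p))).card -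
            (Y.filter (fun p => ∃ x ∈ Kx ∩ (C \ R), G.IsDominatingSet (x ∪ p))).card ≤
              (G.maxDegree + 1 - C.card) + S.card := by
          omega
        have hcard_R : R.card = R'.card + S.card := by
          have h1 : R'.card = R.card - S.card := Finset.card_sdiff_of_subset hSR
          have h2 := Finset.card_le_card hSR
          omega
        have hS1 : 1 ≤ S.card := Finset.card_pos.2 ⟨x, hxS⟩
        have ihR' := ih R' (hR'R.trans hRC) (by omega)
        calc (Y.filter (fun p => ∃ x ∈ C, G.IsDominatingSet (x ∪ p))).card
            ≤ (Y.filter (fun p => ∃ x ∈ C \ R', G.IsDominatingSet (x ∪ p))).card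
              + R'.card * (G.maxDegree + 1 - C.card + 1) := ihR'
          _ ≤ ((Y.filter (fun p => ∃ x ∈ C \ R, G.IsDominatingSet (x ∪ p))).card
              + ((G.maxDegree + 1 - C.card) + S.card))
              + R'.card * (G.maxDegree + 1 - C.card + 1) := by
              have hcomb : (Y.filter (fun p => ∃ x ∈ C \ R',
                  G.IsDominatingSet (x ∪ p))).card ≤
                  (Y.filter (fun p => ∃ x ∈ C \ R, G.IsDominatingSet (x ∪ p))).card
                    + ((G.maxDegree + 1 - C.card) + S.card) := by omega
              exact Nat.add_le_add_right hcomb _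
          _ ≤ (Y.filter (fun p => ∃ x ∈ C \ R, G.IsDominatingSet (x ∪ p))).card
              + R.card * (G.maxDegree + 1 - C.card + 1) := by
              rw [hcard_R, Nat.add_mul]
              have hstep : (G.maxDegree + 1 - C.card) + S.card ≤
                  S.card * (G.maxDegree + 1 - C.card + 1) := by
                have he : S.card * (G.maxDegree + 1 - C.card + 1) =
                    S.card * (G.maxDegree + 1 - C.card) + S.card := by ring
                rw [he]
                have hm : (G.maxDegree + 1 - C.card) ≤
                    S.card * (G.maxDegree + 1 - C.card) := Nat.le_mul_of_pos_left _ hS1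
                omega
              linarith
    -- apply the induction with R = C
    have hmain : (Y.filter (fun p => ∃ x ∈ C, G.IsDominatingSet (x ∪ p))).card ≤
        C.card * (G.maxDegree + 1 - C.card + 1) := by
      have h0 := hkey C.card C (Finset.Subset.refl C) (le_refl _)
      rw [Finset.sdiff_self] at h0
      have hAUe : Y.filter (fun p => ∃ x ∈ (∅ : Finset (Finset V)),
          G.IsDominatingSet (x ∪ p)) = ∅ := by
        apply Finset.filter_eq_empty_iff.2
        intro p hp
        simp
      rw [hAUe] at h0
      simpa using h0
    -- every part of Y has a partner in C
    have hcover : Y ⊆ Y.filter (fun p => ∃ x ∈ C, G.IsDominatingSet (x ∪ p)) := by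
      intro p hpY
      obtain ⟨q, hqP, hqne, hdq⟩ := hpart p (hYP hpY)
      have hqC : q ∈ C := by
        rw [hC, Finset.mem_sdiff]
        refine ⟨hqP, fun hqY => ?_⟩
        exact hYind p hpY q hqY (Ne.symm hqne) hdq
      exact Finset.mem_filter.2 ⟨hpY, q, hqC, by rwa [Finset.union_comm] at hdq⟩
    have hYAU : Y.card ≤ (Y.filter (fun p => ∃ x ∈ C, G.IsDominatingSet (x ∪ p))).card :=
      Finset.card_le_card hcover
    have hPcard : P.card = Y.card + C.card := by
      have h1 : C.card = P.card - Y.card := Finset.card_sdiff_of_subset hYP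
      have h2 : Y.card ≤ P.card := Finset.card_le_card hYP
      omega
    -- final arithmetic
    have e1 : P.card ≤ C.card * (G.maxDegree + 1 - C.card + 1) + C.card := by
      linarith [hmain, hYAU, hPcard]
    have e2 : C.card * (G.maxDegree + 1 - C.card + 1) + C.card =
        C.card * ((G.maxDegree + 1 - C.card) + 2) := by ring
    have e3 := aux_arith C.card ((G.maxDegree + 1 - C.card) + 2)
    have e4 : C.card + ((G.maxDegree + 1 - C.card) + 2) = G.maxDegree + 3 := by omega
    rw [e4] at e3
    calc P.card * 4 ≤ (C.card * ((G.maxDegree + 1 - C.card) + 2)) * 4 := by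
          have e5 : P.card ≤ C.card * ((G.maxDegree + 1 - C.card) + 2) := by
            rw [← e2]; exact e1
          exact Nat.mul_le_mul_right 4 e5
      _ ≤ (G.maxDegree + 3) ^ 2 := e3

end Aux

/-- For every graph `G`, the coalition number satisfies `C(G) ≤ (Δ(G)+3)²/4`. -/
theorem coalitionNumber_le {V : Type*} [Fintype V] [DecidableEq V]
    (G : SimpleGraph V) [DecidableRel G.Adj] :
    G.coalitionNumber ≤ (G.maxDegree + 3) ^ 2 / 4 := by
  apply csSup_le'
  rintro k ⟨P, hP, rfl⟩
  exact card_le_of_coalition G P hP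
end

section
/- For every cubic (3-regular) graph G, the coalition number satisfies C(G) ≤ 9. -/
/-!
Call two parts of a coalition partition adjacent when they form a coalition. Unless a single
vertex dominates `G`, every part has a partner, and a part that does not dominate a vertex `w`
avoids the set of parts meeting `N[w]`, a vertex cover of this graph with at most `Δ + 1` members.

In a graph without isolated vertices in which every vertex avoids a vertex cover of size `≤ k`,
take a maximum matching with `ν` edges. The unmatched vertices are independent, and since there is
no augmenting path of length three, the unmatched neighbours of a matching edge are all adjacent to
one of its endpoints `a`. A cover avoiding `a` contains them and an endpoint of each matching edge,
so there are at most `k - ν` of them, and the graph has at most `2ν + ν(k - ν) ≤ (k + 2)² / 4`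
vertices. For cubic graphs `k = 4`.
-/

namespace SimpleGraph

section Matching

variable {α : Type*} [DecidableEq α] {H : SimpleGraph α} {M : Finset (α × α)}

def IsPairMatching (H : SimpleGraph α) (M : Finset (α × α)) : Prop :=
  (∀ p ∈ M, H.Adj p.1 p.2) ∧ (M : Set (α × α)).PairwiseDisjoint fun p => ({p.1, p.2} : Finset α)

def matchedVerts (M : Finset (α × α)) : Finset α :=
  M.biUnion fun p => {p.1, p.2}

theorem mem_matchedVerts {x : α} : x ∈ matchedVerts M ↔ ∃ p ∈ M, x = p.1 ∨ x = p.2 := by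
  simp [matchedVerts]

theorem matchedVerts_insert (p : α × α) :
    matchedVerts (insert p M) = {p.1, p.2} ∪ matchedVerts M :=
  Finset.biUnion_insert

theorem card_matchedVerts_le : (matchedVerts M).card ≤ 2 * M.card := by
  rw [mul_comm, ← smul_eq_mul]
  exact Finset.card_biUnion_le_card_mul _ _ _ fun p _ => Finset.card_le_two

theorem card_insert_of_notMem_matchedVerts {u v : α} (hu : u ∉ matchedVerts M) :
    (insert (u, v) M).card = M.card + 1 :=
  Finset.card_insert_of_notMem fun h => hu (mem_matchedVerts.2 ⟨_, h, Or.inl rfl⟩)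

theorem IsPairMatching.eq_of_mem_of_mem (hM : H.IsPairMatching M) {p q : α × α} (hp : p ∈ M)
    (hq : q ∈ M) {x : α} (hxp : x ∈ ({p.1, p.2} : Finset α)) (hxq : x ∈ ({q.1, q.2} : Finset α)) :
    p = q := by
  by_contra hpq
  exact Finset.disjoint_left.1 (hM.2 hp hq hpq) hxp hxq

theorem IsPairMatching.insert_of_notMem (hM : H.IsPairMatching M) {u v : α} (huv : H.Adj u v)
    (hu : u ∉ matchedVerts M) (hv : v ∉ matchedVerts M) : H.IsPairMatching (insert (u, v) M) := by
  refine ⟨Finset.forall_mem_insert _ _ _ |>.2 ⟨huv, hM.1⟩, ?_⟩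
  rw [Finset.coe_insert]
  refine hM.2.insert fun q hq _ => Finset.disjoint_left.2 fun x hx hxq => ?_
  have hx' : x ∈ matchedVerts M := Finset.mem_biUnion.2 ⟨q, hq, hxq⟩
  rcases Finset.mem_insert.1 hx with rfl | hx
  · exact hu hx'
  · rw [Finset.mem_singleton.1 hx] at hx'
    exact hv hx'

theorem IsPairMatching.erase (hM : H.IsPairMatching M) (p : α × α) :
    H.IsPairMatching (M.erase p) :=
  ⟨fun q hq => hM.1 q (Finset.mem_of_mem_erase hq),
    hM.2.subset (by simp [Finset.coe_erase])⟩

theorem IsPairMatching.notMem_matchedVerts_erase (hM : H.IsPairMatching M) {p : α × α}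
    (hp : p ∈ M) {x : α} (hx : x ∈ ({p.1, p.2} : Finset α)) : x ∉ matchedVerts (M.erase p) := by
  intro h
  obtain ⟨q, hq, hxq⟩ := Finset.mem_biUnion.1 h
  exact Finset.ne_of_mem_erase hq (hM.eq_of_mem_of_mem (Finset.mem_of_mem_erase hq) hp hxq hx)

theorem IsPairMatching.card_le_card_inter (hM : H.IsPairMatching M) {D : Finset α}
    (hD : H.IsVertexCover D) : M.card ≤ (D ∩ matchedVerts M).card := by
  refine Finset.card_le_card_of_forall_subsingleton (fun p x => x ∈ ({p.1, p.2} : Finset α))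
    (fun p hp => ?_) fun x _ p hp q hq => hM.eq_of_mem_of_mem hp.1 hq.1 hp.2 hq.2
  have hp' : p.1 ∈ matchedVerts M ∧ p.2 ∈ matchedVerts M :=
    ⟨mem_matchedVerts.2 ⟨p, hp, Or.inl rfl⟩, mem_matchedVerts.2 ⟨p, hp, Or.inr rfl⟩⟩
  rcases hD (hM.1 p hp) with h | h
  · exact ⟨p.1, Finset.mem_inter.2 ⟨h, hp'.1⟩, by simp⟩
  · exact ⟨p.2, Finset.mem_inter.2 ⟨h, hp'.2⟩, by simp⟩

theorem exists_isPairMatching_forall_card_le [Fintype α] (H : SimpleGraph α) :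
    ∃ M, H.IsPairMatching M ∧ ∀ M', H.IsPairMatching M' → M'.card ≤ M.card := by
  classical
  obtain ⟨M, hM, hmax⟩ := (Finset.univ.filter H.IsPairMatching).exists_max_image Finset.card
    ⟨∅, Finset.mem_filter.2 ⟨Finset.mem_univ _, by simp [IsPairMatching]⟩⟩
  exact ⟨M, (Finset.mem_filter.1 hM).2, fun M' hM' => hmax M' (by simpa using hM')⟩

theorem IsPairMatching.not_adj_of_notMem_matchedVerts (hM : H.IsPairMatching M)
    (hmax : ∀ M', H.IsPairMatching M' → M'.card ≤ M.card) {u u' : α} (hu : u ∉ matchedVerts M)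
    (hu' : u' ∉ matchedVerts M) : ¬ H.Adj u u' := fun huu' => by
  have := hmax _ (hM.insert_of_notMem huu' hu hu')
  rw [card_insert_of_notMem_matchedVerts hu] at this
  omega

/-- A maximum matching has no augmenting path of length three. -/
theorem IsPairMatching.eq_of_adj_of_adj (hM : H.IsPairMatching M)
    (hmax : ∀ M', H.IsPairMatching M' → M'.card ≤ M.card) {v w u u' : α} (hvw : (v, w) ∈ M)
    (hu : u ∉ matchedVerts M) (hu' : u' ∉ matchedVerts M) (huv : H.Adj u v)
    (hu'w : H.Adj u' w) : u = u' := by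
  by_contra hne
  set M₀ := M.erase (v, w)
  have hsub : matchedVerts M₀ ⊆ matchedVerts M :=
    Finset.biUnion_subset_biUnion_of_subset_left _ (Finset.erase_subset _ _)
  have hv : v ∉ matchedVerts M₀ := hM.notMem_matchedVerts_erase hvw (by simp)
  have hw : w ∉ matchedVerts M₀ := hM.notMem_matchedVerts_erase hvw (by simp)
  have hvM : v ∈ matchedVerts M := mem_matchedVerts.2 ⟨_, hvw, Or.inl rfl⟩
  have hwM : w ∈ matchedVerts M := mem_matchedVerts.2 ⟨_, hvw, Or.inr rfl⟩
  have hM₁ := (hM.erase (v, w)).insert_of_notMem hu'w (fun h => hu' (hsub h)) hw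
  have hu₁ : u ∉ matchedVerts (insert (u', w) M₀) := by
    rw [matchedVerts_insert]
    simp only [Finset.mem_union, Finset.mem_insert, Finset.mem_singleton, not_or]
    exact ⟨⟨hne, fun h => hu (h ▸ hwM)⟩, fun h => hu (hsub h)⟩
  have hv₁ : v ∉ matchedVerts (insert (u', w) M₀) := by
    rw [matchedVerts_insert]
    simp only [Finset.mem_union, Finset.mem_insert, Finset.mem_singleton, not_or]
    exact ⟨⟨fun h => hu' (h ▸ hvM), (hM.1 _ hvw).ne⟩, hv⟩
  have := hmax _ (hM₁.insert_of_notMem huv hu₁ hv₁)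
  rw [card_insert_of_notMem_matchedVerts hu₁, card_insert_of_notMem_matchedVerts (hsub.mt hu'),
    Finset.card_erase_of_mem hvw] at this
  have := Finset.card_pos.2 ⟨_, hvw⟩
  omega

theorem IsPairMatching.exists_forall_adj_of_adj_unmatched (hM : H.IsPairMatching M)
    (hmax : ∀ M', H.IsPairMatching M' → M'.card ≤ M.card) {p : α × α} (hp : p ∈ M) :
    ∃ a, (a = p.1 ∨ a = p.2) ∧
      ∀ u ∉ matchedVerts M, H.Adj u p.1 ∨ H.Adj u p.2 → H.Adj a u := by
  by_contra! h
  obtain ⟨u₁, hu₁, hadj₁, hn₁⟩ := h p.1 (Or.inl rfl)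
  obtain ⟨u₂, hu₂, hadj₂, hn₂⟩ := h p.2 (Or.inr rfl)
  have h₁ : H.Adj u₁ p.2 := hadj₁.resolve_left fun h' => hn₁ h'.symm
  have h₂ : H.Adj u₂ p.1 := hadj₂.resolve_right fun h' => hn₂ h'.symm
  have := hM.eq_of_adj_of_adj hmax hp hu₂ hu₁ h₂ h₁
  exact hn₂ (this ▸ h₁.symm)

theorem four_mul_card_le_of_forall_exists_isVertexCover [Fintype α] {k : ℕ}
    (hiso : ∀ v, ∃ w, H.Adj v w)
    (hcover : ∀ v, ∃ D : Finset α, H.IsVertexCover D ∧ v ∉ D ∧ D.card ≤ k) :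
    4 * Fintype.card α ≤ (k + 2) ^ 2 := by
  classical
  obtain ⟨M, hM, hmax⟩ := exists_isPairMatching_forall_card_le H
  set S := matchedVerts M
  let X : α × α → Finset α := fun p => (Finset.univ \ S).filter fun u => H.Adj u p.1 ∨ H.Adj u p.2
  have hX : ∀ p ∈ M, (X p).card + M.card ≤ k := by
    intro p hp
    obtain ⟨a, -, ha⟩ := hM.exists_forall_adj_of_adj_unmatched hmax hp
    obtain ⟨D, hD, haD, hDk⟩ := hcover a
    have hXD : X p ⊆ D \ S := fun u hu => by
      obtain ⟨huS, hadj⟩ := Finset.mem_filter.1 hu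
      have huS := (Finset.mem_sdiff.1 huS).2
      exact Finset.mem_sdiff.2 ⟨(hD (ha u huS hadj)).resolve_left haD, huS⟩
    have := Finset.card_inter_add_card_sdiff D S
    have := Finset.card_le_card hXD
    have : M.card ≤ (D ∩ S).card := hM.card_le_card_inter hD
    omega
  have hU : (Finset.univ \ S).card ≤ ∑ p ∈ M, (X p).card := by
    refine (Finset.card_le_card fun u hu => ?_).trans Finset.card_biUnion_le
    have huS := (Finset.mem_sdiff.1 hu).2
    obtain ⟨w, huw⟩ := hiso u
    have hwS : w ∈ S := by
      by_contra hwS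
      exact hM.not_adj_of_notMem_matchedVerts hmax huS hwS huw
    obtain ⟨p, hp, hwp⟩ := mem_matchedVerts.1 hwS
    refine Finset.mem_biUnion.2 ⟨p, hp, Finset.mem_filter.2 ⟨hu, ?_⟩⟩
    rcases hwp with rfl | rfl
    exacts [Or.inl huw, Or.inr huw]
  have hsum : ∑ p ∈ M, ((X p).card + M.card) ≤ M.card * k := by
    simpa using Finset.sum_le_sum hX
  rw [Finset.sum_add_distrib, Finset.sum_const, smul_eq_mul] at hsum
  have hcard : Fintype.card α = (Finset.univ \ S).card + S.card :=
    (Finset.card_sdiff_add_card_eq_card (Finset.subset_univ S)).symm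
  have := card_matchedVerts_le (M := M)
  nlinarith [sq_nonneg ((k : ℤ) + 2 - 2 * M.card)]

end Matching

section Coalition

variable {V : Type*} [DecidableEq V] {G : SimpleGraph V} {P : Finset (Finset V)}

def coalitionGraph (G : SimpleGraph V) (P : Finset (Finset V)) : SimpleGraph P where
  Adj A B := A ≠ B ∧ G.IsDominatingSet (A.1 ∪ B.1)
  symm := ⟨fun A B h => ⟨h.1.symm, Finset.union_comm A.1 B.1 ▸ h.2⟩⟩
  loopless := ⟨fun _ h => h.1 rfl⟩

theorem coalitionGraph_adj {A B : P} :
    (G.coalitionGraph P).Adj A B ↔ A ≠ B ∧ G.IsDominatingSet (A.1 ∪ B.1) :=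
  Iff.rfl

theorem isVertexCover_setOf_dominatesVert (w : V) :
    (G.coalitionGraph P).IsVertexCover {A | G.DominatesVert A.1 w} := by
  intro A B hAB
  replace hAB := (coalitionGraph_adj.1 hAB).2
  rcases hAB w with hw | ⟨u, hu, huw⟩
  · exact (Finset.mem_union.1 hw).imp Or.inl Or.inl
  · exact (Finset.mem_union.1 hu).imp (fun h => Or.inr ⟨u, h, huw⟩) fun h => Or.inr ⟨u, h, huw⟩

variable [Fintype V]

theorem card_le_of_forall_dominatesVert [DecidableRel G.Adj]
    (hdisj : ∀ A ∈ P, ∀ B ∈ P, A ≠ B → Disjoint A B) {w : V} {D : Finset P}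
    (hD : ∀ A ∈ D, G.DominatesVert A.1 w) : D.card ≤ G.degree w + 1 := by
  calc _ ≤ (insert w (G.neighborFinset w)).card := by
        refine Finset.card_le_card_of_forall_subsingleton (fun A x => x ∈ A.1) (fun A hA => ?_)
          fun x _ A hA B hB => Subtype.ext ?_
        · rcases hD A hA with hw | ⟨u, hu, huw⟩
          · exact ⟨w, Finset.mem_insert_self _ _, hw⟩
          · exact ⟨u, Finset.mem_insert_of_mem ((G.mem_neighborFinset w u).2 huw.symm), hu⟩
        · by_contra hAB
          exact Finset.disjoint_left.1 (hdisj _ A.2 _ B.2 hAB) hA.2 hB.2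
    _ ≤ G.degree w + 1 := by
        rw [← G.card_neighborFinset_eq_degree]
        exact Finset.card_insert_le _ _

theorem card_le_degree_add_one_of_isDominatingSet_singleton [DecidableRel G.Adj] {v : V}
    (hv : G.IsDominatingSet {v}) : Fintype.card V ≤ G.degree v + 1 := by
  calc Fintype.card V ≤ (insert v (G.neighborFinset v)).card := by
        refine Finset.card_le_card fun x _ => ?_
        rcases hv x with hx | ⟨u, hu, hux⟩
        · exact Finset.mem_singleton.1 hx ▸ Finset.mem_insert_self _ _
        · rw [Finset.mem_singleton.1 hu] at hux
          exact Finset.mem_insert_of_mem ((G.mem_neighborFinset v x).2 hux)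
    _ ≤ G.degree v + 1 := by
        rw [← G.card_neighborFinset_eq_degree]
        exact Finset.card_insert_le _ _

theorem IsCoalitionPartition.card_le_card (hP : G.IsCoalitionPartition P) :
    P.card ≤ Fintype.card V :=
  Finset.card_le_card_of_forall_subsingleton (fun A x => x ∈ A)
    (fun A hA => (hP.1 A hA).imp fun x hx => ⟨Finset.mem_univ x, hx⟩)
    fun x _ A hA B hB => by
      by_contra hAB
      exact Finset.disjoint_left.1 (hP.2.1 A hA.1 B hB.1 hAB) hA.2 hB.2

theorem IsCoalitionPartition.four_mul_card_le [DecidableRel G.Adj] {Δ : ℕ}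
    (hΔ : ∀ v, G.degree v ≤ Δ) (hP : G.IsCoalitionPartition P) :
    4 * P.card ≤ (Δ + 3) ^ 2 := by
  classical
  by_cases hsingleton : ∃ A ∈ P, ∃ v, A = {v} ∧ G.IsDominatingSet A
  · obtain ⟨A, -, v, rfl, hv⟩ := hsingleton
    have := hP.card_le_card.trans ((card_le_degree_add_one_of_isDominatingSet_singleton hv).trans
      (Nat.succ_le_succ (hΔ v)))
    nlinarith
  push Not at hsingleton
  have hpart : ∀ A ∈ P, ¬ G.IsDominatingSet A ∧
      ∃ B ∈ P, B ≠ A ∧ G.IsDominatingSet (A ∪ B) := fun A hA =>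
    ((hP.2.2.2 A hA).resolve_left fun ⟨v, hAv, hdom⟩ => hsingleton A hA v hAv hdom).imp_right
      fun ⟨B, hB, hBA, _, hAB⟩ => ⟨B, hB, hBA, hAB⟩
  rw [← Fintype.card_coe]
  refine four_mul_card_le_of_forall_exists_isVertexCover (H := G.coalitionGraph P)
    (fun A => ?_) fun A => ?_
  · obtain ⟨B, hB, hBA, hAB⟩ := (hpart A A.2).2
    exact ⟨⟨B, hB⟩, coalitionGraph_adj.2 ⟨fun h => hBA (congrArg Subtype.val h).symm, hAB⟩⟩
  · obtain ⟨w, hw⟩ : ∃ w, ¬ G.DominatesVert A.1 w := by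
      simpa [IsDominatingSet] using (hpart A A.2).1
    refine ⟨Finset.univ.filter fun B : P => G.DominatesVert B.1 w, ?_, by simpa using hw,
      (card_le_of_forall_dominatesVert hP.2.1 fun B hB => (Finset.mem_filter.1 hB).2).trans
        (Nat.succ_le_succ (hΔ w))⟩
    simpa using isVertexCover_setOf_dominatesVert (P := P) w

theorem coalitionNumber_le [DecidableRel G.Adj] {Δ : ℕ} (hΔ : ∀ v, G.degree v ≤ Δ) :
    G.coalitionNumber ≤ (Δ + 3) ^ 2 / 4 := by
  refine csSup_le' ?_
  rintro _ ⟨P, hP, rfl⟩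
  exact (Nat.le_div_iff_mul_le (by norm_num)).2 (mul_comm 4 P.card ▸ hP.four_mul_card_le hΔ)

end Coalition

end SimpleGraph

/-- For every cubic graph `G`, the coalition number satisfies `C(G) ≤ 9`. -/
theorem coalitionNumber_le_nine_of_cubic {V : Type*} [Fintype V] [DecidableEq V]
    (G : SimpleGraph V) [DecidableRel G.Adj] (hG : G.IsRegularOfDegree 3) :
    G.coalitionNumber ≤ 9 :=
  G.coalitionNumber_le fun v => (hG v).le
end

section
/- In a graph G with maximum degree Δ, every non-dominating set in a coalition partition can form a coalition with at most Δ+1 other sets of the partition. -/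
/-!
Fix a vertex `v` that `A` does not dominate. Every coalition partner `B` of `A` must dominate
`v`, i.e. meet the closed neighbourhood `N[v]`. The parts of a partition are pairwise disjoint,
so they meet `N[v]` in pairwise disjoint nonempty sets, and there are at most
`#N[v] ≤ Δ + 1` of them.
-/

open Finset

theorem Finset.card_le_card_of_forall_inter_nonempty {α : Type*} [DecidableEq α]
    {P : Finset (Finset α)} {T : Finset α} (hP : (P : Set (Finset α)).PairwiseDisjoint id)
    (hT : ∀ B ∈ P, (B ∩ T).Nonempty) : #P ≤ #T :=
  (card_le_card_biUnion (hP.mono fun _ => inter_subset_left) hT).trans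
    (card_le_card (biUnion_subset.2 fun _ _ => inter_subset_right))

namespace SimpleGraph

variable {V : Type*} {G : SimpleGraph V}

theorem DominatesVert.of_union_of_not_left [DecidableEq V] {A B : Finset V} {v : V}
    (h : G.DominatesVert (A ∪ B) v) (hA : ¬ G.DominatesVert A v) : G.DominatesVert B v := by
  rcases h with hv | ⟨u, hu, huv⟩
  · exact .inl ((mem_union.1 hv).resolve_left fun h => hA (.inl h))
  · exact .inr ⟨u, (mem_union.1 hu).resolve_left fun h => hA (.inr ⟨u, h, huv⟩), huv⟩

section closedNeighborFinset

variable (G) [Fintype V] [DecidableEq V] [DecidableRel G.Adj]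

def closedNeighborFinset (v : V) : Finset V :=
  insert v (G.neighborFinset v)

theorem dominatesVert_iff_inter_closedNeighborFinset_nonempty {S : Finset V} {v : V} :
    G.DominatesVert S v ↔ (S ∩ G.closedNeighborFinset v).Nonempty := by
  simp only [DominatesVert, closedNeighborFinset, Finset.Nonempty, mem_inter, mem_insert,
    mem_neighborFinset]
  constructor
  · rintro (hv | ⟨u, hu, huv⟩)
    · exact ⟨v, hv, .inl rfl⟩
    · exact ⟨u, hu, .inr huv.symm⟩
  · rintro ⟨u, hu, rfl | hvu⟩
    · exact .inl hu
    · exact .inr ⟨u, hu, hvu.symm⟩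

theorem card_closedNeighborFinset_le_maxDegree_add_one (v : V) :
    #(G.closedNeighborFinset v) ≤ G.maxDegree + 1 :=
  calc #(G.closedNeighborFinset v) ≤ G.degree v + 1 := card_insert_le _ _
    _ ≤ G.maxDegree + 1 := Nat.add_le_add_right (G.degree_le_maxDegree v) 1

end closedNeighborFinset

theorem IsCoalitionPartition.pairwiseDisjoint [Fintype V] [DecidableEq V]
    {P : Finset (Finset V)} (hP : G.IsCoalitionPartition P) :
    (P : Set (Finset V)).PairwiseDisjoint id :=
  fun A hA B hB hAB => hP.2.1 A hA B hB hAB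

end SimpleGraph

open SimpleGraph in
theorem card_coalition_partners_le_general {V : Type*} [Fintype V] [DecidableEq V]
    (G : SimpleGraph V) [DecidableRel G.Adj] (P : Finset (Finset V))
    (hP : G.IsCoalitionPartition P) (A : Finset V)
    (hnd : ¬ G.IsDominatingSet A) :
    {B | B ∈ P ∧ B ≠ A ∧ ¬ G.IsDominatingSet B ∧ G.IsDominatingSet (A ∪ B)}.ncard
      ≤ G.maxDegree + 1 := by
  obtain ⟨v, hv⟩ : ∃ v, ¬ G.DominatesVert A v := by simpa [IsDominatingSet] using hnd
  set dominators := P.filter fun B => (B ∩ G.closedNeighborFinset v).Nonempty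
  have hsub : {B | B ∈ P ∧ B ≠ A ∧ ¬ G.IsDominatingSet B ∧ G.IsDominatingSet (A ∪ B)}
      ⊆ dominators := fun B ⟨hBP, _, _, hdom⟩ =>
    mem_filter.2 ⟨hBP, (G.dominatesVert_iff_inter_closedNeighborFinset_nonempty).1
      ((hdom v).of_union_of_not_left hv)⟩
  calc _ ≤ (dominators : Set (Finset V)).ncard := Set.ncard_le_ncard hsub (finite_toSet _)
    _ = #dominators := Set.ncard_coe_finset _
    _ ≤ #(G.closedNeighborFinset v) :=
      card_le_card_of_forall_inter_nonempty
        (hP.pairwiseDisjoint.subset (filter_subset _ _)) fun B hB => (mem_filter.1 hB).2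
    _ ≤ G.maxDegree + 1 := G.card_closedNeighborFinset_le_maxDegree_add_one v

/-- In a graph of maximum degree Δ, a non-dominating part of a coalition partition
forms a coalition with at most Δ + 1 other parts of the partition. -/
theorem card_coalition_partners_le {V : Type*} [Fintype V] [DecidableEq V]
    (G : SimpleGraph V) [DecidableRel G.Adj] (P : Finset (Finset V))
    (hP : G.IsCoalitionPartition P) (A : Finset V) (hA : A ∈ P)
    (hnd : ¬ G.IsDominatingSet A) :
    {B | B ∈ P ∧ B ≠ A ∧ ¬ G.IsDominatingSet B ∧ G.IsDominatingSet (A ∪ B)}.ncard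
      ≤ G.maxDegree + 1 :=
  card_coalition_partners_le_general G P hP A hnd
end

section
/- In a cubic graph G, if a coalition partition P has 9 parts, then at most 6 of the parts can be singletons. -/
/-- In a cubic graph, a dominating set `S` forces `|V| ≤ 4 |S|`. -/
lemma dom_card_aux {V : Type*} [Fintype V] [DecidableEq V] (G : SimpleGraph V)
    [DecidableRel G.Adj] (hG : G.IsRegularOfDegree 3) (S : Finset V)
    (hS : G.IsDominatingSet S) : Fintype.card V ≤ 4 * S.card := by
  have hsub : (Finset.univ : Finset V) ⊆
      S.biUnion (fun v => insert v (G.neighborFinset v)) := by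
    intro u _
    rcases hS u with h | ⟨x, hx, hadj⟩
    · exact Finset.mem_biUnion.2 ⟨u, h, Finset.mem_insert_self _ _⟩
    · exact Finset.mem_biUnion.2
        ⟨x, hx, Finset.mem_insert_of_mem ((G.mem_neighborFinset x u).2 hadj)⟩
  calc Fintype.card V ≤ (S.biUnion (fun v => insert v (G.neighborFinset v))).card :=
        by simpa using Finset.card_le_card hsub
    _ ≤ ∑ v ∈ S, (insert v (G.neighborFinset v)).card := Finset.card_biUnion_le
    _ ≤ ∑ v ∈ S, 4 := Finset.sum_le_sum (fun v _ => by
        calc (insert v (G.neighborFinset v)).card ≤ (G.neighborFinset v).card + 1 :=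
              Finset.card_insert_le _ _
          _ = 4 := by rw [G.card_neighborFinset_eq_degree, hG v])
    _ = 4 * S.card := by rw [Finset.sum_const, smul_eq_mul, mul_comm]

/-- A 9-part coalition partition of a cubic graph has at most 6 singleton parts. -/
theorem cubic_nine_part_partition_singletons_le_six {V : Type*} [Fintype V]
    [DecidableEq V] (G : SimpleGraph V) [DecidableRel G.Adj] (hG : G.IsRegularOfDegree 3)
    (hcard : 6 ≤ Fintype.card V) (P : Finset (Finset V))
    (hP : G.IsCoalitionPartition P) (h9 : P.card = 9) :
    (P.filter (fun A => A.card = 1)).card ≤ 6 := by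
  by_contra hlt
  push_neg at hlt
  obtain ⟨hne, hdisj, hcover, hcoal⟩ := hP
  set Q := P.filter (fun A => A.card = 1) with hQdef
  have hQ7 : 7 ≤ Q.card := hlt
  -- the graph has at least 9 vertices
  have hn9 : 9 ≤ Fintype.card V := by
    calc (9 : ℕ) = ∑ _A ∈ P, 1 := by rw [Finset.sum_const, h9]; simp
      _ ≤ ∑ A ∈ P, A.card := Finset.sum_le_sum (fun A hA => (hne A hA).card_pos)
      _ = (P.biUnion id).card := (Finset.card_biUnion (fun A hA B hB hAB =>
            hdisj A hA B hB hAB)).symm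
      _ ≤ Fintype.card V := Finset.card_le_univ _
  -- every singleton part has a non-singleton, non-dominating coalition partner
  have hpart : ∀ A, ∃ B, A ∈ Q → B ∈ P ∧ B.card ≠ 1 ∧ ¬ G.IsDominatingSet B ∧
      G.IsDominatingSet (A ∪ B) := by
    intro A
    by_cases hA : A ∈ Q
    · have hAP := (Finset.mem_filter.1 hA).1
      have hA1 := (Finset.mem_filter.1 hA).2
      rcases hcoal A hAP with ⟨v, hAv, hdom⟩ | ⟨_, B, hBP, _, hBnd, hdomU⟩
      · exfalso
        have := dom_card_aux G hG A hdom
        rw [hA1] at this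
        omega
      · refine ⟨B, fun _ => ⟨hBP, ?_, hBnd, hdomU⟩⟩
        intro hB1
        have := dom_card_aux G hG (A ∪ B) hdomU
        have hle : (A ∪ B).card ≤ 2 := by
          calc (A ∪ B).card ≤ A.card + B.card := Finset.card_union_le _ _
            _ = 2 := by rw [hA1, hB1]
        omega
    · exact ⟨∅, fun h => absurd h hA⟩
  choose f hf using hpart
  -- pigeonhole: some non-singleton part B is the partner of at least 4 singletons
  set R := P.filter (fun A => ¬ A.card = 1) with hRdef
  have hmaps : ∀ A ∈ Q, f A ∈ R := fun A hA =>
    Finset.mem_filter.2 ⟨(hf A hA).1, (hf A hA).2.1⟩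
  have hQR : Q.card + R.card = 9 := by
    rw [hQdef, hRdef, Finset.card_filter_add_card_filter_not, h9]
  obtain ⟨B, _hBR, hF⟩ := Finset.exists_lt_card_fiber_of_mul_lt_card_of_maps_to
    hmaps (by omega : R.card * 3 < Q.card)
  set F := Q.filter (fun A => f A = B) with hFdef
  -- B is not dominating: pick an undominated vertex w
  obtain ⟨A0, hA0⟩ : F.Nonempty := Finset.card_pos.1 (by omega)
  have hBnd : ¬ G.IsDominatingSet B := by
    rw [← (Finset.mem_filter.1 hA0).2]
    exact (hf A0 (Finset.mem_filter.1 hA0).1).2.2.1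
  obtain ⟨w, hBw⟩ : ∃ w, ¬ G.DominatesVert B w := by
    by_contra h
    push_neg at h
    exact hBnd h
  -- the closed neighborhood of w
  set Nw := insert w (G.neighborFinset w) with hNwdef
  have hNw4 : Nw.card = 4 := by
    rw [hNwdef, Finset.card_insert_of_notMem (G.notMem_neighborFinset_self w),
      G.card_neighborFinset_eq_degree, hG w]
  have hwNw : w ∈ Nw := Finset.mem_insert_self _ _
  have hadjNw : ∀ u, G.Adj u w → u ∈ Nw := fun u h =>
    Finset.mem_insert_of_mem ((G.mem_neighborFinset w u).2 h.symm)
  -- each part in the fiber F is a singleton inside Nw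
  have hsub : ∀ A ∈ F, A ⊆ Nw := by
    intro A hA
    have hAQ : A ∈ Q := (Finset.mem_filter.1 hA).1
    have hfA : f A = B := (Finset.mem_filter.1 hA).2
    have hdomU : G.IsDominatingSet (A ∪ B) := by
      rw [← hfA] at *; exact (hf A hAQ).2.2.2
    obtain ⟨v, hv⟩ := Finset.card_eq_one.1 (Finset.mem_filter.1 hAQ).2
    have hvNw : v ∈ Nw := by
      rcases hdomU w with h | ⟨u, hu, hadj⟩
      · rcases Finset.mem_union.1 h with h' | h'
        · rw [hv] at h'; exact Finset.mem_singleton.1 h' ▸ hwNw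
        · exact absurd (Or.inl h') hBw
      · rcases Finset.mem_union.1 hu with h' | h'
        · rw [hv, Finset.mem_singleton] at h'; rw [← h'] at *; exact hadjNw u hadj
        · exact absurd (Or.inr ⟨u, h', hadj⟩) hBw
    rw [hv]
    exact Finset.singleton_subset_iff.2 hvNw
  -- the fiber F fills the whole closed neighborhood Nw
  have hcard1 : ∀ A ∈ F, A.card = 1 := fun A hA =>
    (Finset.mem_filter.1 (Finset.mem_filter.1 hA).1).2
  have hFP : ∀ A ∈ F, A ∈ P := fun A hA =>
    (Finset.mem_filter.1 (Finset.mem_filter.1 hA).1).1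
  have hUNw : F.biUnion id = Nw := by
    have hbc : (F.biUnion id).card = ∑ A ∈ F, (id A).card :=
      Finset.card_biUnion (fun A hA A' hA' hne' =>
        hdisj A (hFP A hA) A' (hFP A' hA') hne')
    have hs1 : ∑ A ∈ F, (id A).card = ∑ _A ∈ F, 1 :=
      Finset.sum_congr rfl (fun A hA => hcard1 A hA)
    have hs2 : ∑ _A ∈ F, (1 : ℕ) = F.card := by rw [Finset.sum_const]; simp
    apply Finset.eq_of_subset_of_card_le
    · intro x hx
      obtain ⟨A, hA, hxA⟩ := Finset.mem_biUnion.1 hx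
      exact hsub A hA hxA
    · omega
  -- hence no vertex of Nw lies in a non-singleton part
  have hNwOut : ∀ C ∈ P, C.card ≠ 1 → ∀ x ∈ Nw, x ∉ C := by
    intro C hC hC1 x hx
    rw [← hUNw] at hx
    obtain ⟨A, hA, hxA⟩ := Finset.mem_biUnion.1 hx
    have hAC : A ≠ C := fun h => hC1 (h ▸ hcard1 A hA)
    exact fun hxC => (Finset.disjoint_left.1
      (hdisj A (hFP A hA) C hC hAC)) hxA hxC
  -- there is a singleton part not contained in Nw
  have hQsub : ¬ Q ⊆ Q.filter (fun A => A ⊆ Nw) := by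
    intro hQs
    have hle : Q.card ≤ 4 := by
      have h1 : Q.card ≤ (Q.filter (fun A => A ⊆ Nw)).card := Finset.card_le_card hQs
      have h2 : ((Q.filter (fun A => A ⊆ Nw)).biUnion id).card ≤ Nw.card :=
        Finset.card_le_card (by
          intro x hx
          obtain ⟨A, hA, hxA⟩ := Finset.mem_biUnion.1 hx
          exact (Finset.mem_filter.1 hA).2 hxA)
      have hbc : ((Q.filter (fun A => A ⊆ Nw)).biUnion id).card
          = ∑ A ∈ Q.filter (fun A => A ⊆ Nw), (id A).card :=
        Finset.card_biUnion (fun A hA A' hA' hne' =>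
          hdisj A (Finset.mem_filter.1 (Finset.mem_filter.1 hA).1).1
            A' (Finset.mem_filter.1 (Finset.mem_filter.1 hA').1).1 hne')
      have hs1 : ∑ A ∈ Q.filter (fun A => A ⊆ Nw), (id A).card
          = ∑ _A ∈ Q.filter (fun A => A ⊆ Nw), 1 := Finset.sum_congr rfl
            (fun A hA => (Finset.mem_filter.1 (Finset.mem_filter.1 hA).1).2)
      have hs2 : ∑ _A ∈ Q.filter (fun A => A ⊆ Nw), (1 : ℕ)
          = (Q.filter (fun A => A ⊆ Nw)).card := by rw [Finset.sum_const]; simp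
      omega
    omega
  obtain ⟨A5, hA5Q, hA5n⟩ := Finset.not_subset.1 hQsub
  have hA5P : A5 ∈ P := (Finset.mem_filter.1 hA5Q).1
  have hA5nsub : ¬ A5 ⊆ Nw := fun h => hA5n (Finset.mem_filter.2 ⟨hA5Q, h⟩)
  obtain ⟨v5, hv5A, hv5n⟩ := Finset.not_subset.1 hA5nsub
  have hA5v : A5 = {v5} := by
    obtain ⟨v, hv⟩ := Finset.card_eq_one.1 (Finset.mem_filter.1 hA5Q).2
    rw [hv] at hv5A ⊢
    rw [Finset.mem_singleton.1 hv5A]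
  -- the partner of A5 cannot dominate w, yet A5 ∪ partner must: contradiction
  obtain ⟨hB'P, hB'1, _, hB'dom⟩ := hf A5 hA5Q
  rcases hB'dom w with h | ⟨u, hu, hadj⟩
  · rcases Finset.mem_union.1 h with h' | h'
    · rw [hA5v, Finset.mem_singleton] at h'
      exact hv5n (h' ▸ hwNw)
    · exact hNwOut (f A5) hB'P hB'1 w hwNw h'
  · rcases Finset.mem_union.1 hu with h' | h'
    · rw [hA5v, Finset.mem_singleton] at h'
      rw [h'] at hadj
      exact hv5n (hadjNw v5 hadj)
    · exact hNwOut (f A5) hB'P hB'1 u (hadjNw u hadj) h'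
end
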